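/- The Gaussian Ψ₀(x,t) = (πħ)^{−1/4}(Ω/μ)^{1/4} exp(−((iρ+Ω)/(2ħμ))x²)·exp(−(i/2)Ωt − (iμκc/(4Ω))t) has unit L² norm in x for every t and solves the 1D RGPE. -/

import Mathlib

open MeasureTheory

noncomputable section

/-- `Ψ(·,t)` is in the Schwartz space for each `t`. -/
def SchwartzSlice (Ψ : ℝ → ℝ → ℂ) : Prop :=
  ∀ t : ℝ, ∃ f : SchwartzMap ℝ ℂ, ∀ x : ℝ, f x = Ψ x t

/-- The 1D reduced Gross–Pitaevskii equation. -/
def SolvesRGPE (hbar μ ρ σ κ a b c : ℝ) (Ψ : ℝ → ℝ → ℂ) : Prop :=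
  ∀ x t : ℝ,
    (-Complex.I * (hbar : ℂ)) * deriv (fun τ => Ψ x τ) t
      - ((μ * hbar ^ 2 / 2 : ℝ) : ℂ) * deriv (fun y => deriv (fun z => Ψ z t) y) x
      - Complex.I * (hbar : ℂ) * (ρ : ℂ) *
          ((x : ℂ) * deriv (fun y => Ψ y t) x + Ψ x t / 2)
      + ((σ / 2 * x ^ 2 : ℝ) : ℂ) * Ψ x t
      + ((κ / 2 * (a * x ^ 2 * (∫ y : ℝ, ‖Ψ y t‖ ^ 2)
            + 2 * b * x * (∫ y : ℝ, y * ‖Ψ y t‖ ^ 2)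
            + c * (∫ y : ℝ, y ^ 2 * ‖Ψ y t‖ ^ 2)) : ℝ) : ℂ) * Ψ x t = 0

/-- The Gaussian
`Ψ₀(x,t) = (πħ)^{−1/4}(Ω/μ)^{1/4} exp(−((iρ+Ω)/(2ħμ))x²)·exp(−(i/2)Ωt − (iμκc/(4Ω))t)`. -/
def Psi0sol (hbar μ ρ κ c Ω : ℝ) (x t : ℝ) : ℂ :=
  (((Real.pi * hbar) ^ (-(1 / 4 : ℝ)) * (Ω / μ) ^ ((1 / 4 : ℝ)) : ℝ) : ℂ) *
    Complex.exp (-((Complex.I * (ρ : ℂ) + (Ω : ℂ)) / ((2 * hbar * μ : ℝ) : ℂ)) *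
      (x : ℂ) ^ 2) *
    Complex.exp (-(Complex.I / 2) * (Ω : ℂ) * (t : ℂ)
      - Complex.I * ((μ * κ * c / (4 * Ω) : ℝ) : ℂ) * (t : ℂ))

/-! Write the Gaussian as a mode `C · exp (A x² + E t)`. Differentiation multiplies a mode by `E`,
`2 A x` and `4 A² x² + 2 A`, and its moments are Gaussian integrals: the first vanishes by parity
and the second is the mass divided by `-4 Re A`. The RGPE thus becomes a quadratic polynomial in `x`
times the mode, and it holds iff both coefficients vanish: the `x²` coefficient is a Riccati-type
equation for `A`, solved by `A = -(iρ + Ω)/(2ħμ)` precisely because `Ω² + ρ² = (σ + κa)μ`, and the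
constant coefficient is a dispersion relation that fixes `E`. The prefactor makes the mass 1. -/

open Real Filter Topology Complex

theorem Function.Odd.integral_eq_zero {E : Type*} [NormedAddCommGroup E] [NormedSpace ℝ E]
    {f : ℝ → E} (hf : Function.Odd f) : ∫ x, f x = 0 := by
  have h := integral_neg_eq_self f volume
  simp only [hf _, integral_neg] at h
  have h2 : (2 : ℝ) • ∫ x, f x = 0 := by
    rw [two_smul]
    nth_rewrite 1 [← h]
    exact neg_add_cancel _
  exact (smul_eq_zero.mp h2).resolve_left two_ne_zero

theorem integral_sq_mul_exp_neg_mul_sq {b : ℝ} (hb : 0 < b) :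
    ∫ x : ℝ, x ^ 2 * rexp (-b * x ^ 2) = √(π / b) / (2 * b) := by
  have hint0 := integrable_exp_neg_mul_sq hb
  have hint2 : Integrable fun x : ℝ => x ^ 2 * rexp (-b * x ^ 2) := by
    simpa using integrable_rpow_mul_exp_neg_mul_sq hb (s := 2) (by norm_num)
  have hderiv (x : ℝ) : HasDerivAt (fun y => y * rexp (-b * y ^ 2))
      (rexp (-b * x ^ 2) - 2 * b * (x ^ 2 * rexp (-b * x ^ 2))) x := by
    refine ((hasDerivAt_id' x).fun_mul ((hasDerivAt_pow 2 x).const_mul (-b)).exp).congr_deriv ?_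
    norm_num
    ring
  have hdecay : Tendsto (fun y : ℝ => y * rexp (-b * y ^ 2)) (cocompact ℝ) (𝓝 0) := by
    refine squeeze_zero_norm (fun x => le_of_eq ?_)
      (tendsto_rpow_abs_mul_exp_neg_mul_sq_cocompact hb 1)
    rw [Real.rpow_one, norm_mul, Real.norm_eq_abs, Real.norm_of_nonneg (exp_pos _).le]
  -- the boundary terms of `x e^{-b x²}` vanish, so integrating its derivative gives zero
  have hibp := integral_of_hasDerivAt_of_tendsto hderiv (hint0.sub (hint2.const_mul _))
    (hdecay.mono_left atBot_le_cocompact) (hdecay.mono_left atTop_le_cocompact)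
  rw [integral_sub hint0 (hint2.const_mul _), integral_const_mul, integral_gaussian] at hibp
  rw [eq_div_iff (by positivity)]
  linarith

def gaussianMode (C A E : ℂ) (x t : ℝ) : ℂ :=
  C * cexp (A * (x : ℂ) ^ 2 + E * t)

section gaussianMode

variable (C A E : ℂ)

theorem gaussianMode_neg (x t : ℝ) : gaussianMode C A E (-x) t = gaussianMode C A E x t := by
  simp [gaussianMode]

theorem hasDerivAt_gaussianMode_time (x t : ℝ) :
    HasDerivAt (fun τ => gaussianMode C A E x τ) (E * gaussianMode C A E x t) t := by
  have h := (((hasDerivAt_id' t).ofReal_comp).const_mul E).const_add (A * (x : ℂ) ^ 2)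
  refine (h.cexp.const_mul C).congr_deriv ?_
  norm_num [gaussianMode]
  ring

theorem hasDerivAt_gaussianMode_space (x t : ℝ) :
    HasDerivAt (fun y => gaussianMode C A E y t) (2 * A * x * gaussianMode C A E x t) x := by
  have h := (((hasDerivAt_id' x).ofReal_comp.fun_pow 2).const_mul A).add_const (E * t)
  refine (h.cexp.const_mul C).congr_deriv ?_
  norm_num [gaussianMode]
  ring

theorem deriv_gaussianMode_space (t : ℝ) :
    deriv (fun y => gaussianMode C A E y t) = fun x => 2 * A * x * gaussianMode C A E x t :=
  funext fun x => (hasDerivAt_gaussianMode_space C A E x t).deriv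

theorem deriv_deriv_gaussianMode_space (x t : ℝ) :
    deriv (deriv (fun y => gaussianMode C A E y t)) x
      = (4 * A ^ 2 * x ^ 2 + 2 * A) * gaussianMode C A E x t := by
  have h := ((hasDerivAt_id' x).ofReal_comp.const_mul (2 * A)).fun_mul
    (hasDerivAt_gaussianMode_space C A E x t)
  rw [deriv_gaussianMode_space, h.deriv]
  norm_num
  ring

theorem norm_sq_gaussianMode (x t : ℝ) :
    ‖gaussianMode C A E x t‖ ^ 2
      = ‖C‖ ^ 2 * rexp (2 * E.re * t) * rexp (-(-2 * A.re) * x ^ 2) := by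
  rw [gaussianMode, norm_mul, norm_exp, mul_pow, mul_assoc, ← Real.exp_add, ← Real.exp_nat_mul]
  congr 2
  simp only [add_re, ← ofReal_pow, re_mul_ofReal]
  push_cast
  ring

end gaussianMode

section moments

variable {C A E : ℂ}

theorem integral_norm_sq_gaussianMode (t : ℝ) :
    ∫ x, ‖gaussianMode C A E x t‖ ^ 2 = ‖C‖ ^ 2 * rexp (2 * E.re * t) * √(π / (-2 * A.re)) := by
  simp_rw [norm_sq_gaussianMode, integral_const_mul, integral_gaussian]

theorem integral_mul_norm_sq_gaussianMode (t : ℝ) :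
    ∫ x, x * ‖gaussianMode C A E x t‖ ^ 2 = 0 :=
  Function.Odd.integral_eq_zero fun x => by simp [gaussianMode_neg]

theorem integral_sq_mul_norm_sq_gaussianMode (hA : A.re < 0) (t : ℝ) :
    ∫ x, x ^ 2 * ‖gaussianMode C A E x t‖ ^ 2
      = (∫ x, ‖gaussianMode C A E x t‖ ^ 2) / (-4 * A.re) := by
  have hb : 0 < -2 * A.re := by linarith
  simp_rw [norm_sq_gaussianMode, mul_left_comm _ (‖C‖ ^ 2 * _), integral_const_mul,
    integral_sq_mul_exp_neg_mul_sq hb, integral_gaussian]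
  field_simp
  ring

end moments

-- `hquad` and `hconst` are the `x²` and constant coefficients of the equation divided by the mode;
-- `κ c / (-8 Re A)` is `κ c / 2` times the second moment of a unit-mass mode.
theorem solvesRGPE_gaussianMode {hbar μ ρ σ κ a b c : ℝ} {C A E : ℂ} (hA : A.re < 0)
    (hmass : ∀ t, ∫ x, ‖gaussianMode C A E x t‖ ^ 2 = 1)
    (hquad : 2 * μ * hbar ^ 2 * A ^ 2 + 2 * I * hbar * ρ * A = (σ + κ * a) / 2)
    (hconst : I * hbar * E + μ * hbar ^ 2 * A + I * hbar * ρ / 2 = κ * c / (-8 * A.re)) :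
    SolvesRGPE hbar μ ρ σ κ a b c (gaussianMode C A E) := by
  intro x t
  rw [(hasDerivAt_gaussianMode_time C A E x t).deriv, deriv_deriv_gaussianMode_space,
    deriv_gaussianMode_space, integral_mul_norm_sq_gaussianMode,
    integral_sq_mul_norm_sq_gaussianMode hA, hmass]
  push_cast
  linear_combination (gaussianMode C A E x t) * (-(x : ℂ) ^ 2 * hquad - hconst)

def psi0Amplitude (hbar μ Ω : ℝ) : ℂ :=
  ((π * hbar) ^ (-(1 / 4 : ℝ)) * (Ω / μ) ^ (1 / 4 : ℝ) : ℝ)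

def psi0Exponent (hbar μ ρ Ω : ℝ) : ℂ :=
  -((I * ρ + Ω) / ((2 * hbar * μ : ℝ) : ℂ))

def psi0Rate (μ κ c Ω : ℝ) : ℂ :=
  -(I / 2) * Ω - I * ((μ * κ * c / (4 * Ω) : ℝ) : ℂ)

theorem Psi0sol_eq_gaussianMode (hbar μ ρ κ c Ω : ℝ) :
    Psi0sol hbar μ ρ κ c Ω
      = gaussianMode (psi0Amplitude hbar μ Ω) (psi0Exponent hbar μ ρ Ω) (psi0Rate μ κ c Ω) := by
  ext x t
  rw [Psi0sol, gaussianMode, mul_assoc, ← Complex.exp_add, psi0Amplitude, psi0Exponent, psi0Rate]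
  ring_nf

theorem re_psi0Exponent (hbar μ ρ Ω : ℝ) :
    (psi0Exponent hbar μ ρ Ω).re = -(Ω / (2 * hbar * μ)) := by
  rw [psi0Exponent, neg_re, div_ofReal_re]
  simp

theorem re_psi0Rate (μ κ c Ω : ℝ) : (psi0Rate μ κ c Ω).re = 0 := by
  rw [psi0Rate, sub_re, mul_re I, ofReal_im]
  simp

theorem norm_sq_psi0Amplitude {hbar μ Ω : ℝ} (hhbar : 0 < hbar) (hμ : 0 < μ) (hΩ : 0 ≤ Ω) :
    ‖psi0Amplitude hbar μ Ω‖ ^ 2 = √(Ω / (π * hbar * μ)) := by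
  have hπħ : 0 ≤ π * hbar := by positivity
  rw [psi0Amplitude, norm_real, norm_eq_abs, sq_abs, mul_pow, ← rpow_natCast, ← rpow_natCast,
    ← rpow_mul hπħ, ← rpow_mul (by positivity), neg_mul, rpow_neg hπħ, ← inv_rpow hπħ,
    ← mul_rpow (by positivity) (by positivity), sqrt_eq_rpow]
  norm_num
  field_simp

theorem psi0Exponent_quadratic {hbar μ ρ Ω : ℝ} (hhbar : hbar ≠ 0) (hμ : μ ≠ 0) :
    2 * μ * hbar ^ 2 * psi0Exponent hbar μ ρ Ω ^ 2 + 2 * I * hbar * ρ * psi0Exponent hbar μ ρ Ω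
      = (Ω ^ 2 + ρ ^ 2) / (2 * μ) := by
  have : (hbar : ℂ) ≠ 0 := by exact_mod_cast hhbar
  have : (μ : ℂ) ≠ 0 := by exact_mod_cast hμ
  rw [psi0Exponent]
  push_cast
  field_simp
  ring_nf
  simp only [I_sq]
  ring

theorem psi0Rate_dispersion {hbar μ ρ κ c Ω : ℝ} (hhbar : hbar ≠ 0) (hμ : μ ≠ 0) (hΩ : Ω ≠ 0) :
    I * hbar * psi0Rate μ κ c Ω + μ * hbar ^ 2 * psi0Exponent hbar μ ρ Ω + I * hbar * ρ / 2
      = κ * c / (-8 * (psi0Exponent hbar μ ρ Ω).re) := by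
  have : (hbar : ℂ) ≠ 0 := by exact_mod_cast hhbar
  have : (μ : ℂ) ≠ 0 := by exact_mod_cast hμ
  have : (Ω : ℂ) ≠ 0 := by exact_mod_cast hΩ
  rw [re_psi0Exponent, psi0Rate, psi0Exponent]
  push_cast
  field_simp
  ring_nf
  simp only [I_sq]
  ring

theorem integral_norm_sq_psi0 {hbar μ ρ κ c Ω : ℝ} (hhbar : 0 < hbar) (hμ : 0 < μ) (hΩ : 0 < Ω)
    (t : ℝ) :
    ∫ x, ‖gaussianMode (psi0Amplitude hbar μ Ω) (psi0Exponent hbar μ ρ Ω) (psi0Rate μ κ c Ω)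
      x t‖ ^ 2 = 1 := by
  rw [integral_norm_sq_gaussianMode, norm_sq_psi0Amplitude hhbar hμ hΩ.le, re_psi0Rate,
    re_psi0Exponent, mul_zero, zero_mul, Real.exp_zero, mul_one, ← sqrt_mul (by positivity)]
  field_simp
  exact sqrt_one

/-- The Gaussian `Ψ₀` has unit `L²` norm and solves the 1D RGPE. -/
theorem gaussian_solves_RGPE
    (hbar μ ρ σ κ a b c Ω : ℝ) (h_hbar : 0 < hbar) (hμ : 0 < μ)
    (hpos : 0 < (σ + κ * a) * μ - ρ ^ 2)
    (hΩ : Ω = Real.sqrt ((σ + κ * a) * μ - ρ ^ 2)) :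
    (∀ t : ℝ, (∫ x : ℝ, ‖Psi0sol hbar μ ρ κ c Ω x t‖ ^ 2) = 1) ∧
    SolvesRGPE hbar μ ρ σ κ a b c (Psi0sol hbar μ ρ κ c Ω) := by
  have hΩpos : 0 < Ω := hΩ ▸ sqrt_pos.mpr hpos
  have hσ : (σ + κ * a : ℂ) = (Ω ^ 2 + ρ ^ 2) / μ := by
    have : (μ : ℂ) ≠ 0 := by exact_mod_cast hμ.ne'
    rw [hΩ, ← ofReal_pow, sq_sqrt hpos.le]
    push_cast
    field_simp
    ring
  have hmass := integral_norm_sq_psi0 (ρ := ρ) (κ := κ) (c := c) h_hbar hμ hΩpos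
  rw [Psi0sol_eq_gaussianMode]
  refine ⟨hmass, solvesRGPE_gaussianMode ?_ hmass ?_
    (psi0Rate_dispersion h_hbar.ne' hμ.ne' hΩpos.ne')⟩
  · rw [re_psi0Exponent, neg_lt_zero]
    positivity
  · rw [psi0Exponent_quadratic h_hbar.ne' hμ.ne', hσ]
    ring

end
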